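/- arXiv:2308.15558 — 2 statements merged into one kernel-verified Lean document; each statement's English description precedes it below -/
import Mathlib

section
/- (Conditional mutual information identity for measurement processes.) Let ρ_0^{AMK} = ρ_0^A ⊗ ρ_0^M ⊗ |0⟩⟨0|^K be a product initial state and let ρ_2^{AMK} = Σ_k p_k ρ_{2,k}^{AM} ⊗ |k⟩⟨k|^K be classical on K. Then I(A:M|K)_{ρ_2} = -I_GO + ΔS^{MK} - ΔS^{AMK}, where I_GO := S(ρ_0^A) - S(A|K)_{ρ_2} is the Groenewold–Ozawa information gain, ΔS^{MK} := S(ρ_2^{MK}) - S(ρ_0^{MK}), and ΔS^{AMK} := S(ρ_2^{AMK}) - S(ρ_0^{AMK}). -/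
open Matrix Kronecker BigOperators
open scoped ComplexOrder
noncomputable section

/-- von Neumann entropy of a (Hermitian) matrix, via its eigenvalues. -/
def vN {n : Type*} [Fintype n] [DecidableEq n] (ρ : Matrix n n ℂ) : ℝ :=
  if h : ρ.IsHermitian then -∑ i, h.eigenvalues i * Real.log (h.eigenvalues i) else 0

/-- A density operator: positive semidefinite with unit trace. -/
def IsDensity {n : Type*} [Fintype n] [DecidableEq n] (ρ : Matrix n n ℂ) : Prop :=
  ρ.PosSemidef ∧ ρ.trace = 1

/-- Hermitian functional calculus. -/
def hfun {n : Type*} [Fintype n] [DecidableEq n] (f : ℝ → ℝ) (Hm : Matrix n n ℂ) :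
    Matrix n n ℂ :=
  if h : Hm.IsHermitian then
    (Matrix.IsHermitian.eigenvectorUnitary h : Matrix n n ℂ) *
      Matrix.diagonal (fun i => (f (h.eigenvalues i) : ℂ)) *
      star (Matrix.IsHermitian.eigenvectorUnitary h : Matrix n n ℂ)
  else 0

/-- Matrix logarithm (of a Hermitian matrix). -/
def mlog {n : Type*} [Fintype n] [DecidableEq n] (ρ : Matrix n n ℂ) : Matrix n n ℂ :=
  hfun Real.log ρ

/-- Umegaki relative entropy `D(ρ‖σ) = Tr[ρ(ln ρ - ln σ)]`. -/
def relEnt {n : Type*} [Fintype n] [DecidableEq n] (ρ σ : Matrix n n ℂ) : ℝ :=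
  ((ρ * (mlog ρ - mlog σ)).trace).re

/-- Internal energy `E(ρ;H) = Tr[ρH]`. -/
def energy {n : Type*} [Fintype n] (ρ H : Matrix n n ℂ) : ℝ := ((ρ * H).trace).re

/-- Nonequilibrium free energy `F(ρ;H) = E(ρ;H) - β⁻¹ S(ρ)`. -/
def freeEnergy {n : Type*} [Fintype n] [DecidableEq n] (β : ℝ) (ρ H : Matrix n n ℂ) : ℝ :=
  energy ρ H - β⁻¹ * vN ρ

/-- Partition function `Z = Tr[e^{-βH}]`. -/
def partitionZ {n : Type*} [Fintype n] [DecidableEq n] (β : ℝ) (H : Matrix n n ℂ) : ℝ :=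
  ((hfun Real.exp ((-β : ℂ) • H)).trace).re

/-- Gibbs state `γ = e^{-βH}/Z`. -/
def gibbs {n : Type*} [Fintype n] [DecidableEq n] (β : ℝ) (H : Matrix n n ℂ) :
    Matrix n n ℂ :=
  ((partitionZ β H : ℂ))⁻¹ • hfun Real.exp ((-β : ℂ) • H)

/-- Equilibrium free energy `F_eq(H) = -β⁻¹ ln Z`. -/
def eqFreeEnergy {n : Type*} [Fintype n] [DecidableEq n] (β : ℝ) (H : Matrix n n ℂ) : ℝ :=
  -β⁻¹ * Real.log (partitionZ β H)

/-- Partial trace over the second tensor factor. -/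
def ptraceSecond {a b : Type*} [Fintype b] (ρ : Matrix (a × b) (a × b) ℂ) : Matrix a a ℂ :=
  Matrix.of fun i j => ∑ m, ρ (i, m) (j, m)

/-- Partial trace over the first tensor factor. -/
def ptraceFirst {a b : Type*} [Fintype a] (ρ : Matrix (a × b) (a × b) ℂ) : Matrix b b ℂ :=
  Matrix.of fun i j => ∑ m, ρ (m, i) (m, j)

/-- Quantum mutual information of a bipartite state. -/
def mutualInfo {a b : Type*} [Fintype a] [DecidableEq a] [Fintype b] [DecidableEq b]
    (ρ : Matrix (a × b) (a × b) ℂ) : ℝ :=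
  vN (ptraceSecond ρ) + vN (ptraceFirst ρ) - vN ρ

/-- `Φ ⊗ id` : a map on the first factor, extended by the identity on the second. -/
def extendRight {a b : Type*} [Fintype a] [Fintype b]
    (Φ : Matrix a a ℂ →ₗ[ℂ] Matrix a a ℂ) (ρ : Matrix (a × b) (a × b) ℂ) :
    Matrix (a × b) (a × b) ℂ :=
  Matrix.of fun p q => Φ (Matrix.of fun i j => ρ (i, p.2) (j, q.2)) p.1 q.1

/-- `id ⊗ Φ` : a map on the second factor, extended by the identity on the first. -/
def extendLeft {a b : Type*} [Fintype a] [Fintype b]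
    (Φ : Matrix b b ℂ →ₗ[ℂ] Matrix b b ℂ) (ρ : Matrix (a × b) (a × b) ℂ) :
    Matrix (a × b) (a × b) ℂ :=
  Matrix.of fun p q => Φ (Matrix.of fun i j => ρ (p.1, i) (q.1, j)) p.2 q.2

/-- Complete positivity: all finite identity extensions preserve positive semidefiniteness. -/
def IsCP {a : Type*} [Fintype a] [DecidableEq a]
    (Φ : Matrix a a ℂ →ₗ[ℂ] Matrix a a ℂ) : Prop :=
  ∀ (m : ℕ) (ρ : Matrix (a × Fin m) (a × Fin m) ℂ),
    ρ.PosSemidef → (extendRight Φ ρ).PosSemidef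

/-- Trace preservation. -/
def IsTP {a : Type*} [Fintype a]
    (Φ : Matrix a a ℂ →ₗ[ℂ] Matrix a a ℂ) : Prop :=
  ∀ ρ : Matrix a a ℂ, (Φ ρ).trace = ρ.trace

/-- Unitality. -/
def IsUnital {a : Type*} [Fintype a] [DecidableEq a]
    (Φ : Matrix a a ℂ →ₗ[ℂ] Matrix a a ℂ) : Prop :=
  Φ 1 = 1

/-- A classical-quantum state `Σ_k p_k ρ_k^{AM} ⊗ |k⟩⟨k|^K` on `A × M × K`. -/
def cqState3 {a b c : Type*} [DecidableEq c] (p : c → ℝ)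
    (ρk : c → Matrix (a × b) (a × b) ℂ) : Matrix (a × b × c) (a × b × c) ℂ :=
  Matrix.of fun x y =>
    if x.2.2 = y.2.2 then (p x.2.2 : ℂ) * ρk x.2.2 (x.1, x.2.1) (y.1, y.2.1) else 0

/-- A classical-quantum state `Σ_k p_k σ_k^A ⊗ |k⟩⟨k|^K` on `A × K`. -/
def cqState2 {a c : Type*} [DecidableEq c] (p : c → ℝ)
    (σk : c → Matrix a a ℂ) : Matrix (a × c) (a × c) ℂ :=
  Matrix.of fun x y =>
    if x.2 = y.2 then (p x.2 : ℂ) * σk x.2 x.1 y.1 else 0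

/-- The `AK`-marginal of a state on `A × M × K`. -/
def margAK {a b c : Type*} [Fintype b] (ρ : Matrix (a × b × c) (a × b × c) ℂ) :
    Matrix (a × c) (a × c) ℂ :=
  Matrix.of fun p q => ∑ m, ρ (p.1, m, p.2) (q.1, m, q.2)

/-- The `K`-marginal of a state on `A × M × K`. -/
def margK {a b c : Type*} [Fintype a] [Fintype b] (ρ : Matrix (a × b × c) (a × b × c) ℂ) :
    Matrix c c ℂ :=
  Matrix.of fun k l => ∑ i : a, ∑ m : b, ρ (i, m, k) (i, m, l)

/-- Conditional mutual information `I(A:M|K) = S(AK) + S(MK) - S(AMK) - S(K)`. -/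
def condMI {a b c : Type*} [Fintype a] [DecidableEq a] [Fintype b] [DecidableEq b]
    [Fintype c] [DecidableEq c] (ρ : Matrix (a × b × c) (a × b × c) ℂ) : ℝ :=
  vN (margAK ρ) + vN (ptraceFirst ρ) - vN ρ - vN (margK ρ)

/-- Mutual information `I(A:K) = S(A) + S(K) - S(AK)` for a state on `A × M × K`. -/
def miAK {a b c : Type*} [Fintype a] [DecidableEq a] [Fintype b] [DecidableEq b]
    [Fintype c] [DecidableEq c] (ρ : Matrix (a × b × c) (a × b × c) ℂ) : ℝ :=
  vN (ptraceSecond ρ) + vN (margK ρ) - vN (margAK ρ)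

/-- Shannon entropy of a probability distribution. -/
def shannon {c : Type*} [Fintype c] (p : c → ℝ) : ℝ := -∑ k, p k * Real.log (p k)

/-- A probability distribution on a finite set. -/
def IsProb {c : Type*} [Fintype c] (p : c → ℝ) : Prop := (∀ k, 0 ≤ p k) ∧ ∑ k, p k = 1


open Polynomial in
private lemma myCharmatrix_conj {n : Type*} [Fintype n] [DecidableEq n]
    (U D : Matrix n n ℂ) (hU : U * star U = 1) :
    charmatrix (U * D * star U)
      = (RingHom.mapMatrix (C : ℂ →+* ℂ[X])) U * charmatrix D
          * (RingHom.mapMatrix (C : ℂ →+* ℂ[X])) (star U) := by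
  unfold charmatrix
  rw [mul_sub, sub_mul, _root_.map_mul, _root_.map_mul]
  congr 1
  have h1 : (RingHom.mapMatrix (C : ℂ →+* ℂ[X])) U
      * (RingHom.mapMatrix (C : ℂ →+* ℂ[X])) (star U) = 1 := by
    rw [← _root_.map_mul, hU, RingHom.map_one]
  have comm : ∀ (M : Matrix n n ℂ[X]),
      (Matrix.scalar n (X : ℂ[X])) * M = M * (Matrix.scalar n (X : ℂ[X])) := by
    intro M
    ext i j
    simp [Matrix.scalar_apply, Matrix.diagonal_mul, Matrix.mul_diagonal, mul_comm]
  rw [eq_comm, ← comm, mul_assoc, h1, mul_one]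

open Polynomial in
private lemma myCharpoly_conj {n : Type*} [Fintype n] [DecidableEq n]
    (U D : Matrix n n ℂ) (hU : U * star U = 1) :
    (U * D * star U).charpoly = D.charpoly := by
  unfold Matrix.charpoly
  rw [myCharmatrix_conj U D hU, Matrix.det_mul, Matrix.det_mul]
  have h1 : ((RingHom.mapMatrix (C : ℂ →+* ℂ[X])) U).det
      * ((RingHom.mapMatrix (C : ℂ →+* ℂ[X])) (star U)).det = 1 := by
    rw [← Matrix.det_mul, ← _root_.map_mul, hU, RingHom.map_one, Matrix.det_one]
  linear_combination (charmatrix D).det * h1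

open Polynomial in
private lemma myCharpoly_diag {n : Type*} [Fintype n] [DecidableEq n] (d : n → ℂ) :
    (Matrix.diagonal d).charpoly = ∏ i, (X - C (d i)) := by
  unfold Matrix.charpoly
  have h : charmatrix (Matrix.diagonal d) = Matrix.diagonal (fun i => X - C (d i)) := by
    ext i j
    by_cases h : i = j
    · subst h; simp
    · simp [Matrix.charmatrix_apply_ne _ _ _ h, Matrix.diagonal_apply_ne _ h,
        Matrix.diagonal_apply_ne d h]
  rw [h, Matrix.det_diagonal]

open Polynomial in
private lemma myCharpoly_of_diag {n : Type*} [Fintype n] [DecidableEq n]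
    {A : Matrix n n ℂ} (U : Matrix n n ℂ) (hU : U * star U = 1)
    (d : n → ℝ) (hAd : A = U * Matrix.diagonal (fun i => (d i : ℂ)) * star U) :
    A.charpoly = ∏ i, (X - C ((d i : ℂ))) := by
  rw [hAd, myCharpoly_conj _ _ hU, myCharpoly_diag]

open Polynomial in
private lemma myEig_mult_eq {n : Type*} [Fintype n] [DecidableEq n]
    {A : Matrix n n ℂ} (hA : A.IsHermitian)
    (U : Matrix n n ℂ) (hU : U * star U = 1)
    (d : n → ℝ) (hAd : A = U * Matrix.diagonal (fun i => (d i : ℂ)) * star U) :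
    Finset.univ.val.map hA.eigenvalues = Finset.univ.val.map d := by
  have hV : (hA.eigenvectorUnitary : Matrix n n ℂ)
      * star (hA.eigenvectorUnitary : Matrix n n ℂ) = 1 :=
    (Unitary.mem_iff.mp hA.eigenvectorUnitary.2).2
  have h1 : A.charpoly = ∏ i, (X - C ((hA.eigenvalues i : ℂ))) :=
    myCharpoly_of_diag _ hV hA.eigenvalues hA.spectral_theorem
  have h2 : A.charpoly = ∏ i, (X - C ((d i : ℂ))) :=
    myCharpoly_of_diag U hU d hAd
  have key : ∀ (c : n → ℝ), (∏ i, (X - C ((c i : ℂ)))).roots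
      = Finset.univ.val.map (fun i => ((c i : ℂ))) := by
    intro c
    have := Polynomial.roots_multiset_prod_X_sub_C
      (Finset.univ.val.map (fun i => ((c i : ℂ))))
    rw [Multiset.map_map] at this
    rw [Finset.prod_eq_multiset_prod]
    simpa [Function.comp] using this
  have hroots : Finset.univ.val.map (fun i => ((hA.eigenvalues i : ℂ)))
      = Finset.univ.val.map (fun i => ((d i : ℂ))) := by
    rw [← key, ← key, ← h1, ← h2]
  apply Multiset.map_injective (f := (fun x : ℝ => (x : ℂ))) Complex.ofReal_injective
  rw [Multiset.map_map, Multiset.map_map]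
  exact hroots

private lemma mySum_eig_eq {n : Type*} [Fintype n] [DecidableEq n]
    {A : Matrix n n ℂ} (hA : A.IsHermitian)
    (U : Matrix n n ℂ) (hU : U * star U = 1)
    (d : n → ℝ) (hAd : A = U * Matrix.diagonal (fun i => (d i : ℂ)) * star U)
    (g : ℝ → ℝ) : ∑ i, g (hA.eigenvalues i) = ∑ i, g (d i) := by
  have h := myEig_mult_eq hA U hU d hAd
  rw [Finset.sum_eq_multiset_sum, Finset.sum_eq_multiset_sum,
    show (Finset.univ.val.map fun i => g (hA.eigenvalues i))
      = (Finset.univ.val.map hA.eigenvalues).map g by rw [Multiset.map_map]; rfl,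
    show (Finset.univ.val.map fun i => g (d i))
      = (Finset.univ.val.map d).map g by rw [Multiset.map_map]; rfl, h]

private lemma myConjTranspose_kron {a b : Type*} (A : Matrix a a ℂ) (B : Matrix b b ℂ) :
    (A ⊗ₖ B)ᴴ = Aᴴ ⊗ₖ Bᴴ := by
  ext ⟨i, j⟩ ⟨k, l⟩
  simp [Matrix.conjTranspose_apply, Matrix.kroneckerMap_apply, star_mul']

private lemma myTrace_eq_sum_eig {n : Type*} [Fintype n] [DecidableEq n]
    {A : Matrix n n ℂ} (hA : A.IsHermitian) (h1 : A.trace = 1) :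
    ∑ i, hA.eigenvalues i = 1 := by
  have ht : ((∑ i, hA.eigenvalues i : ℝ) : ℂ) = 1 := by
    rw [← h1]
    conv_rhs => rw [hA.spectral_theorem, Unitary.conjStarAlgAut_apply]
    rw [Matrix.trace_mul_cycle, (Unitary.mem_iff.mp hA.eigenvectorUnitary.2).1, one_mul,
      Matrix.trace_diagonal]
    push_cast
    rfl
  exact_mod_cast ht

private lemma myVN_kron {a b : Type*} [Fintype a] [DecidableEq a] [Fintype b] [DecidableEq b]
    {ρ : Matrix a a ℂ} {σ : Matrix b b ℂ} (hρ : IsDensity ρ) (hσ : IsDensity σ) :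
    vN (ρ ⊗ₖ σ) = vN ρ + vN σ := by
  obtain ⟨hρP, hρT⟩ := hρ
  obtain ⟨hσP, hσT⟩ := hσ
  have hρH : ρ.IsHermitian := hρP.1
  have hσH : σ.IsHermitian := hσP.1
  have hK : (ρ ⊗ₖ σ).IsHermitian := by
    rw [Matrix.IsHermitian, myConjTranspose_kron, hρH.eq, hσH.eq]
  set U₁ := (hρH.eigenvectorUnitary : Matrix a a ℂ)
  set U₂ := (hσH.eigenvectorUnitary : Matrix b b ℂ)
  have hU₁ : U₁ * star U₁ = 1 := (Unitary.mem_iff.mp hρH.eigenvectorUnitary.2).2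
  have hU₂ : U₂ * star U₂ = 1 := (Unitary.mem_iff.mp hσH.eigenvectorUnitary.2).2
  set e1 := hρH.eigenvalues
  set e2 := hσH.eigenvalues
  have hstarU : star (U₁ ⊗ₖ U₂) = star U₁ ⊗ₖ star U₂ := myConjTranspose_kron U₁ U₂
  have hU : (U₁ ⊗ₖ U₂) * star (U₁ ⊗ₖ U₂) = 1 := by
    rw [hstarU, ← Matrix.mul_kronecker_mul, hU₁, hU₂, Matrix.one_kronecker_one]
  have hdecomp : ρ ⊗ₖ σ = (U₁ ⊗ₖ U₂)
      * Matrix.diagonal (fun p : a × b => ((e1 p.1 * e2 p.2 : ℝ) : ℂ))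
      * star (U₁ ⊗ₖ U₂) := by
    conv_lhs => rw [hρH.spectral_theorem, hσH.spectral_theorem, Unitary.conjStarAlgAut_apply,
      Unitary.conjStarAlgAut_apply]
    rw [hstarU, Matrix.mul_kronecker_mul, Matrix.mul_kronecker_mul,
      Matrix.diagonal_kronecker_diagonal]
    congr 2
    ext p
    push_cast
    rfl
  have hsum := mySum_eig_eq hK (U₁ ⊗ₖ U₂) hU (fun p => e1 p.1 * e2 p.2) hdecomp
    (fun x => x * Real.log x)
  have hs1 : ∑ i, e1 i = 1 := myTrace_eq_sum_eig hρH hρT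
  have hs2 : ∑ j, e2 j = 1 := myTrace_eq_sum_eig hσH hσT
  rw [vN, vN, vN, dif_pos hK, dif_pos hρH, dif_pos hσH]
  rw [show (∑ i, hK.eigenvalues i * Real.log (hK.eigenvalues i))
      = ∑ i, (fun x => x * Real.log x) (hK.eigenvalues i) from rfl, hsum]
  have expand : ∀ (x y : ℝ), (x * y) * Real.log (x * y)
      = (x * Real.log x) * y + x * (y * Real.log y) := by
    intro x y
    rcases eq_or_ne x 0 with hx | hx
    · simp [hx]
    rcases eq_or_ne y 0 with hy | hy
    · simp [hy]
    rw [Real.log_mul hx hy]; ring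
  rw [Fintype.sum_prod_type]
  simp only [expand]
  have split : ∑ i, ∑ j, ((e1 i * Real.log (e1 i)) * e2 j + e1 i * (e2 j * Real.log (e2 j)))
      = (∑ i, e1 i * Real.log (e1 i)) + (∑ j, e2 j * Real.log (e2 j)) := by
    simp only [Finset.sum_add_distrib, ← Finset.mul_sum, ← Finset.sum_mul, hs1, hs2,
      one_mul, mul_one]
  rw [split]
  ring

private lemma myStdBasis_density {K : Type*} [Fintype K] [DecidableEq K] (k0 : K) :
    IsDensity (Matrix.single k0 k0 (1 : ℂ)) := by
  constructor
  · have hH : (Matrix.single k0 k0 (1 : ℂ))ᴴ = Matrix.single k0 k0 (1 : ℂ) := by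
      ext i j
      simp [Matrix.conjTranspose_apply, Matrix.single, and_comm]
    have := Matrix.posSemidef_conjTranspose_mul_self (Matrix.single k0 k0 (1 : ℂ))
    rwa [hH, Matrix.single_mul_single_same, mul_one] at this
  · rw [Matrix.trace]
    simp [Matrix.diag, Matrix.single]

private lemma myKron_density {a b : Type*} [Fintype a] [DecidableEq a] [Fintype b]
    [DecidableEq b] {ρ : Matrix a a ℂ} {σ : Matrix b b ℂ}
    (hρ : IsDensity ρ) (hσ : IsDensity σ) : IsDensity (ρ ⊗ₖ σ) := by
  constructor
  · exact hρ.1.kronecker hσ.1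
  · rw [Matrix.trace_kronecker, hρ.2, hσ.2, mul_one]

/-- `I(A:M|K)_{ρ_2} = -I_GO + ΔS^{MK} - ΔS^{AMK}` for a measurement process
starting from a product state. -/
theorem condMI_eq_neg_IGO_add_entropy_changes
    {A M K : Type*} [Fintype A] [DecidableEq A] [Fintype M] [DecidableEq M]
    [Fintype K] [DecidableEq K]
    (ρ0A : Matrix A A ℂ) (hρ0A : IsDensity ρ0A)
    (ρ0M : Matrix M M ℂ) (hρ0M : IsDensity ρ0M)
    (k0 : K)
    (p : K → ℝ) (hp : IsProb p)
    (ρk : K → Matrix (A × M) (A × M) ℂ) (hρk : ∀ k, IsDensity (ρk k))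
    (ρ0 ρ2 : Matrix (A × M × K) (A × M × K) ℂ)
    (hρ0 : ρ0 = ρ0A ⊗ₖ (ρ0M ⊗ₖ Matrix.single k0 k0 (1 : ℂ)))
    (hρ2 : ρ2 = cqState3 p ρk) :
    condMI ρ2
      = -(vN ρ0A - (vN (margAK ρ2) - vN (margK ρ2)))
        + (vN (ptraceFirst ρ2) - vN (ρ0M ⊗ₖ Matrix.single k0 k0 (1 : ℂ)))
        - (vN ρ2 - vN ρ0) := by
  have hE : IsDensity (Matrix.single k0 k0 (1 : ℂ)) := myStdBasis_density k0
  have hME : IsDensity (ρ0M ⊗ₖ Matrix.single k0 k0 (1 : ℂ)) := myKron_density hρ0M hE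
  have key : vN ρ0 = vN ρ0A + vN (ρ0M ⊗ₖ Matrix.single k0 k0 (1 : ℂ)) := by
    rw [hρ0]
    exact myVN_kron hρ0A hME
  rw [condMI, key]
  ring
end
end

section
/- (Bistochastic channels do not decrease entropy.) Let Θ : L(H) → L(H) be a completely positive linear map that is both trace-preserving and unital (Θ(1) = 1). Then for every density operator ρ on the finite-dimensional Hilbert space H, S(Θ(ρ)) ≥ S(ρ). -/
open Matrix Kronecker BigOperators
open scoped ComplexOrder
noncomputable section

lemma posSemidef_map_of_cp {n : Type*} [Fintype n] [DecidableEq n]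
    (Θ : Matrix n n ℂ →ₗ[ℂ] Matrix n n ℂ) (hCP : IsCP Θ)
    {A : Matrix n n ℂ} (hA : A.PosSemidef) : (Θ A).PosSemidef := by
  have h1 : (A.submatrix (Prod.fst : n × Fin 1 → n) Prod.fst).PosSemidef :=
    hA.submatrix _
  have h2 := hCP 1 _ h1
  have key : ∀ p q : n × Fin 1,
      extendRight Θ (A.submatrix Prod.fst Prod.fst) p q = Θ A p.1 q.1 := fun p q => rfl
  have h3 : Θ A = (extendRight Θ (A.submatrix Prod.fst Prod.fst)).submatrix
      (fun i => (i, (0 : Fin 1))) (fun i => (i, 0)) := by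
    ext i j; rw [submatrix_apply, key]
  rw [h3]
  exact h2.submatrix _

lemma diag_conj {n : Type*} [Fintype n] [DecidableEq n] (W M : Matrix n n ℂ) (i : n) :
    (star W * M * W) i i = star (fun k => W k i) ⬝ᵥ (M *ᵥ fun k => W k i) := by
  simp only [Matrix.mul_apply, dotProduct, mulVec, Matrix.star_apply, Pi.star_apply,
    Finset.sum_mul, Finset.mul_sum]
  rw [Finset.sum_comm]
  exact Finset.sum_congr rfl fun k _ => Finset.sum_congr rfl fun l _ => by ring

/-- bistochastic (CPTP unital) channels do not decrease the
von Neumann entropy. -/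
theorem bistochastic_entropy_nondecreasing
    {n : Type*} [Fintype n] [DecidableEq n]
    (Θ : Matrix n n ℂ →ₗ[ℂ] Matrix n n ℂ)
    (hCP : IsCP Θ) (hTP : IsTP Θ) (hU : IsUnital Θ)
    (ρ : Matrix n n ℂ) (hρ : IsDensity ρ) :
    vN ρ ≤ vN (Θ ρ) := by
  obtain ⟨hPSD, htr⟩ := hρ
  have hH : ρ.IsHermitian := hPSD.1
  have hAPSD : (Θ ρ).PosSemidef := posSemidef_map_of_cp Θ hCP hPSD
  have hH' : (Θ ρ).IsHermitian := hAPSD.1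
  set U : Matrix n n ℂ := (hH.eigenvectorUnitary : Matrix n n ℂ) with hUdef
  set W : Matrix n n ℂ := (hH'.eigenvectorUnitary : Matrix n n ℂ) with hWdef
  set lam : n → ℝ := hH.eigenvalues with hlamdef
  set mu : n → ℝ := hH'.eigenvalues with hmudef
  have hlam0 : ∀ j, 0 ≤ lam j := fun j => hPSD.eigenvalues_nonneg j
  have hUU : U * star U = 1 := Matrix.mem_unitaryGroup_iff.mp hH.eigenvectorUnitary.2
  have hUU' : star U * U = 1 := Matrix.mem_unitaryGroup_iff'.mp hH.eigenvectorUnitary.2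
  have hWW : W * star W = 1 := Matrix.mem_unitaryGroup_iff.mp hH'.eigenvectorUnitary.2
  have hWW' : star W * W = 1 := Matrix.mem_unitaryGroup_iff'.mp hH'.eigenvectorUnitary.2
  -- rank one spectral projections of ρ
  set P : n → Matrix n n ℂ := fun j => Matrix.of fun i k => U i j * star (U k j) with hPdef
  have hPsum : ∑ j, P j = (1 : Matrix n n ℂ) := by
    rw [← hUU]; ext i k
    simp [hPdef, Matrix.mul_apply, Matrix.sum_apply, Matrix.star_apply]
  have hPpsd : ∀ j, (P j).PosSemidef := by
    intro j
    refine Matrix.PosSemidef.of_dotProduct_mulVec_nonneg ?_ ?_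
    · ext i k
      simp only [hPdef, conjTranspose_apply, Matrix.of_apply, star_mul', star_star]
      ring
    · intro x
      have : star x ⬝ᵥ ((P j) *ᵥ x)
          = star (∑ k, star (U k j) * x k) * (∑ k, star (U k j) * x k) := by
        simp only [dotProduct, mulVec, hPdef, Matrix.of_apply, Pi.star_apply,
          Finset.mul_sum, star_sum, star_mul', star_star, Finset.sum_mul]
        rw [Finset.sum_comm]
        exact Finset.sum_congr rfl fun k _ => Finset.sum_congr rfl fun l _ => by ring
      rw [this]
      exact star_mul_self_nonneg _
  have hPtr : ∀ j, (P j).trace = 1 := by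
    intro j
    have h1 : (star U * U) j j = (1 : Matrix n n ℂ) j j := by rw [hUU']
    simp only [Matrix.mul_apply, Matrix.star_apply, Matrix.one_apply_eq] at h1
    simp only [Matrix.trace, Matrix.diag, hPdef, Matrix.of_apply]
    rw [← h1]
    exact Finset.sum_congr rfl fun i _ => by ring
  have hSpec : ρ = ∑ j, (lam j : ℂ) • P j := by
    conv_lhs => rw [hH.spectral_theorem, Unitary.conjStarAlgAut_apply]
    ext i k
    simp only [Matrix.mul_apply, Matrix.sum_apply, Matrix.smul_apply, Matrix.diagonal_apply,
      Matrix.star_apply, smul_eq_mul, hPdef, Matrix.of_apply, Function.comp_apply,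
      Finset.sum_mul]
    simp only [mul_ite, mul_zero, ite_mul, zero_mul, Finset.sum_ite_eq, Finset.sum_ite_eq',
      Finset.mem_univ, if_true]
    exact Finset.sum_congr rfl fun j _ => by
      simp only [hUdef, hlamdef, RCLike.ofReal_alg, Complex.real_smul]
      ring
  have hAspec : Θ ρ = ∑ j, (lam j : ℂ) • Θ (P j) := by
    conv_lhs => rw [hSpec]
    rw [map_sum]
    exact Finset.sum_congr rfl fun j _ => by rw [_root_.map_smul]
  -- the doubly stochastic matrix
  set Bc : n → n → ℂ := fun i j => (star W * Θ (P j) * W) i i with hBcdef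
  have hBpos : ∀ i j, 0 ≤ Bc i j := by
    intro i j
    rw [hBcdef]
    simp only
    rw [diag_conj]
    exact (posSemidef_map_of_cp Θ hCP (hPpsd j)).dotProduct_mulVec_nonneg _
  set B : n → n → ℝ := fun i j => (Bc i j).re with hBdef
  have hBreal : ∀ i j, Bc i j = (B i j : ℂ) := by
    intro i j
    have h := hBpos i j
    rw [Complex.le_def] at h
    apply Complex.ext <;> simp [hBdef, ← h.2]
  have hB0 : ∀ i j, 0 ≤ B i j := by
    intro i j
    have h := hBpos i j
    rw [Complex.le_def] at h
    simpa [hBdef] using h.1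
  have hrow : ∀ i, ∑ j, B i j = 1 := by
    intro i
    have hsum : ∑ j, Θ (P j) = (1 : Matrix n n ℂ) := by
      rw [← map_sum, hPsum, hU]
    have h1 : ∑ j, Bc i j = 1 := by
      have : ∑ j, Bc i j = (star W * (∑ j, Θ (P j)) * W) i i := by
        simp only [hBcdef, Matrix.mul_sum, Matrix.sum_mul, Matrix.sum_apply]
      rw [this, hsum, mul_one, hWW']
      simp
    have := congrArg Complex.re h1
    simpa [hBreal] using this
  have hcol : ∀ j, ∑ i, B i j = 1 := by
    intro j
    have h1 : ∑ i, Bc i j = 1 := by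
      have h2 : ∑ i, Bc i j = (star W * Θ (P j) * W).trace := by
        simp [hBcdef, Matrix.trace, Matrix.diag]
      rw [h2, Matrix.trace_mul_cycle, hWW, one_mul, hTP, hPtr]
    have := congrArg Complex.re h1
    simpa [hBreal] using this
  have hmu : ∀ i, mu i = ∑ j, B i j * lam j := by
    intro i
    have h1 : star W * (Θ ρ) * W = Matrix.diagonal (RCLike.ofReal ∘ mu) :=
      by have h := hH'.conjStarAlgAut_star_eigenvectorUnitary; rw [Unitary.conjStarAlgAut_star_apply] at h; exact h
    have h2 : (star W * (Θ ρ) * W) i i = (mu i : ℂ) := by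
      rw [h1]; simp
    rw [hAspec] at h2
    have h3 : (star W * (∑ j, (lam j : ℂ) • Θ (P j)) * W) i i
        = ∑ j, (lam j : ℂ) * Bc i j := by
      simp only [Matrix.mul_sum, Matrix.sum_mul, Matrix.sum_apply, Matrix.mul_smul,
        Matrix.smul_mul, Matrix.smul_apply, smul_eq_mul, hBcdef]
    rw [h3] at h2
    have h4 := congrArg Complex.re h2.symm
    rw [show (∑ j, (lam j : ℂ) * Bc i j) = ((∑ j, lam j * B i j : ℝ) : ℂ) by
      push_cast; exact Finset.sum_congr rfl fun j _ => by rw [hBreal]] at h4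
    simp only [Complex.ofReal_re] at h4
    rw [h4]
    exact Finset.sum_congr rfl fun j _ => by ring
  -- Jensen
  have key : ∀ i, mu i * Real.log (mu i) ≤ ∑ j, B i j * (lam j * Real.log (lam j)) := by
    intro i
    have hJ := Real.convexOn_mul_log.map_sum_le (t := Finset.univ) (w := fun j => B i j)
      (p := lam) (fun j _ => hB0 i j) (hrow i) (fun j _ => hlam0 j)
    simpa [smul_eq_mul, ← hmu i] using hJ
  have sumineq : ∑ i, mu i * Real.log (mu i) ≤ ∑ j, lam j * Real.log (lam j) := by
    calc ∑ i, mu i * Real.log (mu i)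
        ≤ ∑ i, ∑ j, B i j * (lam j * Real.log (lam j)) :=
          Finset.sum_le_sum fun i _ => key i
      _ = ∑ j, (∑ i, B i j) * (lam j * Real.log (lam j)) := by
          rw [Finset.sum_comm]
          exact Finset.sum_congr rfl fun j _ => by rw [Finset.sum_mul]
      _ = ∑ j, lam j * Real.log (lam j) := by
          simp [hcol]
  unfold vN
  rw [dif_pos hH, dif_pos hH']
  exact neg_le_neg sumineq
end
end
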